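/- (Gauss' divergence theorem for a parametrized 3-patch in ℝ³.) Let R = [a¹,b¹]×[a²,b²]×[a³,b³] ⊂ ℝ³, let x : U₀ → ℝ³ be a C² map on an open neighborhood U₀ of R whose partial derivatives x_i(s) = ∂x/∂sⁱ(s), i = 1,2,3, are linearly independent for every s ∈ R, and let F : U → ℝ³ be a C¹ vector field on an open set U containing x(R). Then ∫_R (div F)(x(s)) · det[x₁(s), x₂(s), x₃(s)] ds = ∑_{i=1}^{3} [ ∫_{R_i} ⟪F(x(s|sⁱ=bⁱ)), (x_{i+1} × x_{i+2})(s|sⁱ=bⁱ)⟫ ds_{(i)} − ∫_{R_i} ⟪F(x(s|sⁱ=aⁱ)), (x_{i+1} × x_{i+2})(s|sⁱ=aⁱ)⟫ ds_{(i)} ], where indices i+1, i+2 are taken cyclically in {1,2,3}, R_i = ∏_{j≠i}[aʲ,bʲ], s|sⁱ=c denotes the point of R with i-th coordinate c and remaining coordinates those of s ∈ R_i, ds_{(i)} is Lebesgue measure on R_i, div F = ∂₁F₁+∂₂F₂+∂₃F₃, and × is the cross product on ℝ³. -/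

import Mathlib

/-! Write `xᵢ = ∂x/∂sⁱ`. The face integrands are the components
`Gᵢ = ⟪F ∘ x, xᵢ₊₁ × xᵢ₊₂⟫` (`pullbackFlux F x i`) of a `C¹` field `G` on a neighbourhood of the
box, so the right-hand side is the boundary term of the divergence theorem on the box for `G`.
It remains to see `∑ᵢ ∂ᵢGᵢ = (div F)(x) · det[x₁, x₂, x₃]`: the terms where `∂ᵢ` falls on `F ∘ x`
add up to `∑ᵢ det[.., DF xᵢ, ..] = tr (DF) · det[x₁, x₂, x₃]`, and those where it falls on a frame
vector cancel in pairs because `∂ᵢxⱼ = ∂ⱼxᵢ`. -/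

open MeasureTheory RealInnerProductSpace

noncomputable section

/-- The cross product on Euclidean 3-space. -/
def cross3 (u v : EuclideanSpace ℝ (Fin 3)) : EuclideanSpace ℝ (Fin 3) :=
  (WithLp.equiv 2 (Fin 3 → ℝ)).symm
    ![u 1 * v 2 - u 2 * v 1, u 2 * v 0 - u 0 * v 2, u 0 * v 1 - u 1 * v 0]

/-- `det[u,v,w]`, the determinant of the 3×3 matrix with columns `u`, `v`, `w`. -/
def det3 (u v w : EuclideanSpace ℝ (Fin 3)) : ℝ :=
  u 0 * (v 1 * w 2 - v 2 * w 1) - u 1 * (v 0 * w 2 - v 2 * w 0) + u 2 * (v 0 * w 1 - v 1 * w 0)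

/-- The point of `R` whose `i`-th coordinate is `c` and whose `(i+1)`-th and `(i+2)`-th
coordinates (cyclically) are `t.1` and `t.2`. -/
def facePt (i : Fin 3) (c : ℝ) (t : ℝ × ℝ) : Fin 3 → ℝ :=
  fun j => if j = i then c else if j = i + 1 then t.1 else t.2

local notation "ℝ³" => EuclideanSpace ℝ (Fin 3)

theorem inner_cross3 (u v w : ℝ³) : ⟪u, cross3 v w⟫ = det3 u v w := by
  simp only [cross3, det3, PiLp.inner_apply, RCLike.inner_apply, conj_trivial, Fin.sum_univ_three,
    WithLp.equiv_symm_apply, Matrix.cons_val_zero, Matrix.cons_val_one,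
    Matrix.cons_val_two, Matrix.head_cons, Matrix.tail_cons]
  ring

theorem sum_det3_map_cyclic (A : ℝ³ →ₗ[ℝ] ℝ³) (X : Fin 3 → ℝ³) :
    ∑ i : Fin 3, det3 (A (X i)) (X (i + 1)) (X (i + 2))
      = (∑ j : Fin 3, A (EuclideanSpace.single j 1) j) * det3 (X 0) (X 1) (X 2) := by
  have hA : ∀ u k, A u k = ∑ j : Fin 3, u j * A (EuclideanSpace.single j 1) k := by
    intro u k
    conv_lhs => rw [← (EuclideanSpace.basisFun (Fin 3) ℝ).sum_repr u]
    simp [map_sum, map_smul]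
  simp only [det3, Fin.sum_univ_three, Fin.reduceAdd, hA (X 0), hA (X 1), hA (X 2)]
  ring

theorem sum_det3_symm_cyclic_eq_zero (p : ℝ³) (X : Fin 3 → ℝ³) (H : Fin 3 → Fin 3 → ℝ³)
    (hH : ∀ i j, H i j = H j i) :
    ∑ i : Fin 3, (det3 p (H i (i + 1)) (X (i + 2)) + det3 p (X (i + 1)) (H i (i + 2))) = 0 := by
  simp only [Fin.sum_univ_three, Fin.reduceAdd]
  rw [hH 1 0, hH 2 0, hH 2 1]
  simp only [det3]
  ring

def cross3L : ℝ³ →L[ℝ] ℝ³ →L[ℝ] ℝ³ :=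
  (LinearMap.mk₂ ℝ cross3
    (fun u v w => by ext k; fin_cases k <;> simp [cross3] <;> ring)
    (fun c u v => by ext k; fin_cases k <;> simp [cross3] <;> ring)
    (fun u v w => by ext k; fin_cases k <;> simp [cross3] <;> ring)
    (fun c u v => by ext k; fin_cases k <;> simp [cross3] <;> ring)).toContinuousBilinearMap

@[simp]
theorem cross3L_apply (u v : ℝ³) : cross3L u v = cross3 u v := rfl

section Calculus

variable {E : Type*} [NormedAddCommGroup E] [NormedSpace ℝ E] {f g : E → ℝ³} {s : E}

theorem DifferentiableAt.cross3 (hf : DifferentiableAt ℝ f s) (hg : DifferentiableAt ℝ g s) :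
    DifferentiableAt ℝ (fun y => cross3 (f y) (g y)) s :=
  (cross3L.hasFDerivAt_of_bilinear hf.hasFDerivAt hg.hasFDerivAt).differentiableAt

theorem fderiv_cross3_apply (hf : DifferentiableAt ℝ f s) (hg : DifferentiableAt ℝ g s) (v : E) :
    fderiv ℝ (fun y => cross3 (f y) (g y)) s v
      = cross3 (f s) (fderiv ℝ g s v) + cross3 (fderiv ℝ f s v) (g s) := by
  have h : HasFDerivAt (fun y => cross3 (f y) (g y)) _ s :=
    cross3L.hasFDerivAt_of_bilinear hf.hasFDerivAt hg.hasFDerivAt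
  rw [h.fderiv]
  rfl

theorem ContDiffOn.cross3 {n : WithTop ℕ∞} {t : Set E} (hf : ContDiffOn ℝ n f t)
    (hg : ContDiffOn ℝ n g t) : ContDiffOn ℝ n (fun y => cross3 (f y) (g y)) t :=
  cross3L.isBoundedBilinearMap.contDiff.comp_contDiffOn (hf.prodMk hg)

end Calculus

def pullbackFlux (F : ℝ³ → ℝ³) (x : (Fin 3 → ℝ) → ℝ³) (i : Fin 3) (s : Fin 3 → ℝ) : ℝ :=
  ⟪F (x s), cross3 (fderiv ℝ x s (Pi.single (i + 1) 1)) (fderiv ℝ x s (Pi.single (i + 2) 1))⟫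

section PullbackFlux

variable {F : ℝ³ → ℝ³} {x : (Fin 3 → ℝ) → ℝ³}

theorem contDiffOn_pullbackFlux {U₀ : Set (Fin 3 → ℝ)} {U : Set ℝ³} (hU₀ : IsOpen U₀)
    (hx : ContDiffOn ℝ 2 x U₀) (hF : ContDiffOn ℝ 1 F U) (i : Fin 3) :
    ContDiffOn ℝ 1 (pullbackFlux F x i) (U₀ ∩ x ⁻¹' U) := by
  have hFx : ContDiffOn ℝ 1 (fun s => F (x s)) (U₀ ∩ x ⁻¹' U) :=
    hF.comp ((hx.of_le one_le_two).mono Set.inter_subset_left) fun s hs => hs.2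
  have hdx : ∀ j : Fin 3, ContDiffOn ℝ 1 (fun s => fderiv ℝ x s (Pi.single j 1)) U₀ := fun j =>
    (hx.fderiv_of_isOpen hU₀ (by norm_num)).clm_apply contDiffOn_const
  exact hFx.inner ℝ (((hdx _).cross3 (hdx _)).mono Set.inter_subset_left)

theorem sum_fderiv_pullbackFlux {s : Fin 3 → ℝ} (hx : ContDiffAt ℝ 2 x s)
    (hF : DifferentiableAt ℝ F (x s)) :
    ∑ i : Fin 3, fderiv ℝ (pullbackFlux F x i) s (Pi.single i 1)
      = (∑ j : Fin 3, fderiv ℝ F (x s) (EuclideanSpace.single j 1) j)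
        * det3 (fderiv ℝ x s (Pi.single 0 1)) (fderiv ℝ x s (Pi.single 1 1))
            (fderiv ℝ x s (Pi.single 2 1)) := by
  set X : Fin 3 → ℝ³ := fun j => fderiv ℝ x s (Pi.single j 1)
  set H : Fin 3 → Fin 3 → ℝ³ := fun i j => fderiv ℝ (fderiv ℝ x) s (Pi.single i 1) (Pi.single j 1)
  have hdx : DifferentiableAt ℝ x s := hx.differentiableAt (by norm_num)
  have hddx : DifferentiableAt ℝ (fderiv ℝ x) s :=
    (hx.fderiv_right (m := 1) (by norm_num)).differentiableAt (by norm_num)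
  have hX : ∀ j : Fin 3, DifferentiableAt ℝ (fun s => fderiv ℝ x s (Pi.single j 1)) s :=
    fun j => hddx.clm_apply (differentiableAt_const _)
  have hFx : DifferentiableAt ℝ (fun s => F (x s)) s := hF.comp s hdx
  have hderivX : ∀ i j : Fin 3,
      fderiv ℝ (fun s => fderiv ℝ x s (Pi.single j 1)) s (Pi.single i 1) = H i j := by
    intro i j
    rw [fderiv_clm_apply hddx (differentiableAt_const _)]
    simp [H]
  have hderivFx : ∀ i : Fin 3, fderiv ℝ (fun s => F (x s)) s (Pi.single i 1)
      = fderiv ℝ F (x s) (X i) := fun i => by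
    rw [fderiv_fun_comp s hF hdx]
    rfl
  have hterm : ∀ i : Fin 3, fderiv ℝ (pullbackFlux F x i) s (Pi.single i 1)
      = det3 (fderiv ℝ F (x s) (X i)) (X (i + 1)) (X (i + 2))
        + (det3 (F (x s)) (H i (i + 1)) (X (i + 2))
          + det3 (F (x s)) (X (i + 1)) (H i (i + 2))) := by
    intro i
    unfold pullbackFlux
    rw [fderiv_inner_apply ℝ hFx ((hX _).cross3 (hX _)),
      fderiv_cross3_apply (hX _) (hX _), hderivX, hderivX, hderivFx, inner_add_right,
      inner_cross3, inner_cross3, inner_cross3]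
    ring
  have htrace := sum_det3_map_cyclic (fderiv ℝ F (x s) : ℝ³ →ₗ[ℝ] ℝ³) X
  simp only [ContinuousLinearMap.coe_coe] at htrace
  rw [Finset.sum_congr rfl fun i _ => hterm i, Finset.sum_add_distrib, htrace,
    sum_det3_symm_cyclic_eq_zero (F (x s)) X H fun i j => hx.isSymmSndFDerivAt (by simp) _ _, add_zero]

end PullbackFlux

theorem integral_divergence_of_contDiffOn {n : ℕ} {E : Type*} [NormedAddCommGroup E]
    [NormedSpace ℝ E] [CompleteSpace E] {a b : Fin (n + 1) → ℝ} (hle : a ≤ b)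
    {V : Set (Fin (n + 1) → ℝ)} (hV : IsOpen V) (hab : Set.Icc a b ⊆ V)
    {f : Fin (n + 1) → (Fin (n + 1) → ℝ) → E} (hf : ∀ i, ContDiffOn ℝ 1 (f i) V) :
    ∫ s in Set.Icc a b, ∑ i, fderiv ℝ (f i) s (Pi.single i 1)
      = ∑ i : Fin (n + 1),
          ((∫ y in Set.Icc (a ∘ i.succAbove) (b ∘ i.succAbove), f i (i.insertNth (b i) y))
            - ∫ y in Set.Icc (a ∘ i.succAbove) (b ∘ i.succAbove), f i (i.insertNth (a i) y)) := by
  have hdiv : ContinuousOn (fun s => ∑ i, fderiv ℝ (f i) s (Pi.single i 1)) V :=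
    continuousOn_finsetSum _ fun i _ =>
      ((hf i).continuousOn_fderiv_of_isOpen hV le_rfl).clm_apply continuousOn_const
  refine integral_divergence_of_hasFDerivAt_off_countable' a b hle f _ ∅ Set.countable_empty
    (fun i => (hf i).continuousOn.mono hab) (fun s hs i => ?_)
    ((hdiv.mono hab).integrableOn_compact isCompact_Icc)
  have hs' : s ∈ V := hab (Set.Ioo_subset_Icc_self (Set.pi_univ_Ioo_subset a b hs.1))
  exact ((hf i).differentiableOn one_ne_zero s hs').differentiableAt (hV.mem_nhds hs')
    |>.hasFDerivAt

section FaceIntegrals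

variable {E : Type*} [NormedAddCommGroup E] [NormedSpace ℝ E]

theorem setIntegral_Icc_prod_eq_fin_two (p q : Fin 2 → ℝ) (g : (Fin 2 → ℝ) → E) :
    ∫ t in Set.Icc (p 0, p 1) (q 0, q 1), g ![t.1, t.2] = ∫ y in Set.Icc p q, g y := by
  have hpre :
      MeasurableEquiv.finTwoArrow.symm ⁻¹' Set.Icc p q = Set.Icc (p 0, p 1) (q 0, q 1) := by
    ext t
    simp [MeasurableEquiv.finTwoArrow, Pi.le_def, Fin.forall_fin_two, Prod.le_def]
  rw [← hpre, ← ((volume_preserving_finTwoArrow ℝ).symm _).setIntegral_preimage_emb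
    MeasurableEquiv.finTwoArrow.symm.measurableEmbedding]
  rfl

theorem setIntegral_Icc_prod_eq_fin_two_swap (p q : Fin 2 → ℝ) (g : (Fin 2 → ℝ) → E) :
    ∫ t in Set.Icc (p 1, p 0) (q 1, q 0), g ![t.2, t.1] = ∫ y in Set.Icc p q, g y := by
  have hpre : Prod.swap ⁻¹' Set.Icc (p 0, p 1) (q 0, q 1) = Set.Icc (p 1, p 0) (q 1, q 0) := by
    ext t
    simp only [Set.mem_preimage, Set.mem_Icc, Prod.le_def, Prod.fst_swap, Prod.snd_swap]
    tauto
  rw [← setIntegral_Icc_prod_eq_fin_two, ← hpre]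
  exact Measure.measurePreserving_swap.setIntegral_preimage_emb
    MeasurableEquiv.prodComm.measurableEmbedding (fun t : ℝ × ℝ => g ![t.1, t.2]) _

theorem setIntegral_facePt (a b : Fin 3 → ℝ) (i : Fin 3) (c : ℝ) (h : (Fin 3 → ℝ) → E) :
    ∫ t in Set.Icc (a (i + 1), a (i + 2)) (b (i + 1), b (i + 2)), h (facePt i c t)
      = ∫ y in Set.Icc (a ∘ i.succAbove) (b ∘ i.succAbove), h (i.insertNth c y) := by
  fin_cases i
  · rw [← setIntegral_Icc_prod_eq_fin_two]
    congr! with t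
    funext j; fin_cases j <;> rfl
  · -- the face `s¹ = c` is parametrized by `(s³, s²)`, against the order of `Fin.succAbove 1`
    rw [← setIntegral_Icc_prod_eq_fin_two_swap]
    congr! with t
    funext j; fin_cases j <;> rfl
  · rw [← setIntegral_Icc_prod_eq_fin_two]
    congr! with t
    funext j; fin_cases j <;> rfl

end FaceIntegrals

theorem gauss_divergence_theorem_general
    (a b : Fin 3 → ℝ) (hab : ∀ i, a i < b i)
    (U₀ : Set (Fin 3 → ℝ)) (hU₀ : IsOpen U₀) (hRU₀ : Set.Icc a b ⊆ U₀)
    (x : (Fin 3 → ℝ) → EuclideanSpace ℝ (Fin 3)) (hx : ContDiffOn ℝ 2 x U₀)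
    (xt : Fin 3 → (Fin 3 → ℝ) → EuclideanSpace ℝ (Fin 3))
    (hxt : ∀ i s, xt i s = fderiv ℝ x s (Pi.single i 1))
    (U : Set (EuclideanSpace ℝ (Fin 3))) (hU : IsOpen U) (hxRU : x '' Set.Icc a b ⊆ U)
    (F : EuclideanSpace ℝ (Fin 3) → EuclideanSpace ℝ (Fin 3)) (hF : ContDiffOn ℝ 1 F U) :
    (∫ s in Set.Icc a b,
        (∑ i : Fin 3, fderiv ℝ F (x s) (EuclideanSpace.single i (1 : ℝ)) i) *
          det3 (xt 0 s) (xt 1 s) (xt 2 s))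
      = ∑ i : Fin 3,
          ((∫ t in Set.Icc (a (i + 1), a (i + 2)) (b (i + 1), b (i + 2)),
              ⟪F (x (facePt i (b i) t)),
                cross3 (xt (i + 1) (facePt i (b i) t)) (xt (i + 2) (facePt i (b i) t))⟫)
            - (∫ t in Set.Icc (a (i + 1), a (i + 2)) (b (i + 1), b (i + 2)),
              ⟪F (x (facePt i (a i) t)),
                cross3 (xt (i + 1) (facePt i (a i) t)) (xt (i + 2) (facePt i (a i) t))⟫)) := by
  obtain rfl : xt = fun i s => fderiv ℝ x s (Pi.single i 1) := funext fun i => funext (hxt i)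
  have hV : IsOpen (U₀ ∩ x ⁻¹' U) := hx.continuousOn.isOpen_inter_preimage hU₀ hU
  have hRV : Set.Icc a b ⊆ U₀ ∩ x ⁻¹' U := fun s hs => ⟨hRU₀ hs, hxRU ⟨s, hs, rfl⟩⟩
  calc _ = ∫ s in Set.Icc a b, ∑ i, fderiv ℝ (pullbackFlux F x i) s (Pi.single i 1) :=
        setIntegral_congr_fun measurableSet_Icc fun s hs => (sum_fderiv_pullbackFlux
          (hx.contDiffAt (hU₀.mem_nhds (hRV hs).1))
          (hF.differentiableOn one_ne_zero _ (hRV hs).2 |>.differentiableAt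
            (hU.mem_nhds (hRV hs).2))).symm
    _ = _ := integral_divergence_of_contDiffOn (fun i => (hab i).le) hV hRV
          (contDiffOn_pullbackFlux hU₀ hx hF)
    _ = _ := Finset.sum_congr rfl fun i _ => by
          rw [← setIntegral_facePt, ← setIntegral_facePt]
          rfl

/-- Gauss' divergence theorem for a parametrized 3-patch in ℝ³:
`∫_R (div F)(x(s))·det[x₁,x₂,x₃](s) ds` equals the sum over the six faces of the outward
flux terms `±∫ ⟪F∘x, x_{i+1}×x_{i+2}⟫`. -/
theorem gauss_divergence_theorem
    (a b : Fin 3 → ℝ) (hab : ∀ i, a i < b i)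
    (U₀ : Set (Fin 3 → ℝ)) (hU₀ : IsOpen U₀) (hRU₀ : Set.Icc a b ⊆ U₀)
    (x : (Fin 3 → ℝ) → EuclideanSpace ℝ (Fin 3)) (hx : ContDiffOn ℝ 2 x U₀)
    (xt : Fin 3 → (Fin 3 → ℝ) → EuclideanSpace ℝ (Fin 3))
    (hxt : ∀ i s, xt i s = fderiv ℝ x s (Pi.single i 1))
    (hreg : ∀ s ∈ Set.Icc a b, LinearIndependent ℝ (fun i => xt i s))
    (U : Set (EuclideanSpace ℝ (Fin 3))) (hU : IsOpen U) (hxRU : x '' Set.Icc a b ⊆ U)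
    (F : EuclideanSpace ℝ (Fin 3) → EuclideanSpace ℝ (Fin 3)) (hF : ContDiffOn ℝ 1 F U) :
    (∫ s in Set.Icc a b,
        (∑ i : Fin 3, fderiv ℝ F (x s) (EuclideanSpace.single i (1 : ℝ)) i) *
          det3 (xt 0 s) (xt 1 s) (xt 2 s))
      = ∑ i : Fin 3,
          ((∫ t in Set.Icc (a (i + 1), a (i + 2)) (b (i + 1), b (i + 2)),
              ⟪F (x (facePt i (b i) t)),
                cross3 (xt (i + 1) (facePt i (b i) t)) (xt (i + 2) (facePt i (b i) t))⟫)
            - (∫ t in Set.Icc (a (i + 1), a (i + 2)) (b (i + 1), b (i + 2)),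
              ⟪F (x (facePt i (a i) t)),
                cross3 (xt (i + 1) (facePt i (a i) t)) (xt (i + 2) (facePt i (a i) t))⟫)) :=
  gauss_divergence_theorem_general a b hab U₀ hU₀ hRU₀ x hx xt hxt U hU hxRU F hF
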